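/- arXiv:1208.0758 — 5 statements merged into one kernel-verified Lean document; each statement's English description precedes it below -/
import Mathlib

section
/- Let X be a real normed vector space and T : X → X a map. Fix x, y ∈ X and set a = ‖x − y‖ and bₙ = ‖Tⁿx − Tⁿy‖. Let α, β, μ, ξ : ℕ → ℝ satisfy, for all n: αₙ ≥ 0, 0 ≤ βₙ < 1, and 1 − βₙ(1 + 2μₙa) ≥ δ for some fixed δ > 0; the contractive condition bₙ² ≤ αₙa² + βₙ(a² + bₙ²) + 2μₙβₙ a bₙ² + ξₙ; and the limit conditions ξₙ → 0 and (αₙ + βₙ)/(1 − βₙ(1 + 2μₙa)) → 1 as n → ∞. Then limsup_{n→∞} ‖Tⁿx − Tⁿy‖ ≤ ‖x − y‖. -/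
open Filter

/-- Theorem 2.1(i): asymptotic nonexpansiveness under the contractive condition
(2.10)-(2.12) and the limit conditions (2.13)-(2.14). -/
theorem stmt_9 {X : Type*} [NormedAddCommGroup X] [NormedSpace ℝ X]
    (T : X → X) (x y : X) (α β μ ξ : ℕ → ℝ) (δ : ℝ) (hδ : 0 < δ)
    (hα : ∀ n, 0 ≤ α n) (hβ0 : ∀ n, 0 ≤ β n) (hβ1 : ∀ n, β n < 1)
    (hden : ∀ n, δ ≤ 1 - β n * (1 + 2 * μ n * ‖x - y‖))
    (hcontr : ∀ n, ‖T^[n] x - T^[n] y‖ ^ 2 ≤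
        α n * ‖x - y‖ ^ 2 + β n * (‖x - y‖ ^ 2 + ‖T^[n] x - T^[n] y‖ ^ 2)
          + 2 * μ n * β n * ‖x - y‖ * ‖T^[n] x - T^[n] y‖ ^ 2 + ξ n)
    (hξ : Tendsto ξ atTop (nhds 0))
    (hlim : Tendsto (fun n => (α n + β n) / (1 - β n * (1 + 2 * μ n * ‖x - y‖)))
        atTop (nhds 1)) :
    limsup (fun n => ‖T^[n] x - T^[n] y‖) atTop ≤ ‖x - y‖ := by
  set a := ‖x - y‖ with ha
  set b := fun n => ‖T^[n] x - T^[n] y‖ with hb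
  set D := fun n => 1 - β n * (1 + 2 * μ n * a) with hD
  have hDpos : ∀ n, 0 < D n := fun n => lt_of_lt_of_le hδ (hden n)
  have hbsq : ∀ n, b n ^ 2 ≤ (α n + β n) / D n * a ^ 2 + ξ n / D n := by
    intro n
    have h := hcontr n
    rw [div_mul_eq_mul_div, ← add_div, le_div_iff₀ (hDpos n)]
    simp only [hb, hD]
    nlinarith [h]
  have hc : Tendsto (fun n => (α n + β n) / D n * a ^ 2 + ξ n / D n)
      atTop (nhds (a ^ 2)) := by
    have h1 : Tendsto (fun n => (α n + β n) / D n * a ^ 2) atTop (nhds (1 * a ^ 2)) :=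
      hlim.mul_const _
    have h2 : Tendsto (fun n => ξ n / D n) atTop (nhds 0) := by
      refine squeeze_zero_norm (a := fun n => |ξ n| / δ) (fun n => ?_)
        (by simpa using hξ.abs.div_const δ)
      rw [Real.norm_eq_abs, abs_div]
      exact div_le_div_of_nonneg_left (abs_nonneg _) hδ (le_trans (hden n) (le_abs_self _))
    simpa using h1.add h2
  refine le_of_forall_pos_le_add fun ε hε => ?_
  have ha0 : 0 ≤ a := norm_nonneg _
  have hlt : a ^ 2 < (a + ε) ^ 2 := by nlinarith
  have hev : ∀ᶠ n in atTop, b n ≤ a + ε := by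
    filter_upwards [hc.eventually_lt_const hlt] with n hn
    have : b n ^ 2 ≤ (a + ε) ^ 2 := le_of_lt (lt_of_le_of_lt (hbsq n) hn)
    exact (pow_le_pow_iff_left₀ (norm_nonneg _) (by positivity) two_ne_zero).mp this
  exact limsup_le_of_le (isCoboundedUnder_le_of_le atTop fun n => norm_nonneg _) hev
end

section
/- Let X be a real normed vector space and T : X → X a map. Fix x, y ∈ X and set a = ‖x − y‖ and bₙ = ‖Tⁿx − Tⁿy‖. Let α, β, μ, ξ : ℕ → ℝ and constants β* < 1, δ > 0 satisfy, for all n: αₙ ≥ 0, 0 ≤ βₙ ≤ β*, and 1 − βₙ(1 + 2μₙ) ≥ δ; the contractive condition bₙ² ≤ αₙa² + βₙ(a² + bₙ²) + 2μₙβₙ a bₙ + ξₙ; and the limit conditions ξₙ → 0 and αₙ + 2βₙ(1 + μₙ) → 1 as n → ∞. Then limsup_{n→∞} ‖Tⁿx − Tⁿy‖ ≤ ‖x − y‖. -/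
open Filter

/-- Theorem 2.2(i): asymptotic nonexpansiveness under the contractive condition
(2.19)-(2.21) and the limit conditions (2.22)-(2.23). -/
theorem stmt_11 {X : Type*} [NormedAddCommGroup X] [NormedSpace ℝ X]
    (T : X → X) (x y : X) (α β μ ξ : ℕ → ℝ) (βstar δ : ℝ) (hβstar : βstar < 1)
    (hδ : 0 < δ)
    (hα : ∀ n, 0 ≤ α n) (hβ0 : ∀ n, 0 ≤ β n) (hβ1 : ∀ n, β n ≤ βstar)
    (hden : ∀ n, δ ≤ 1 - β n * (1 + 2 * μ n))
    (hcontr : ∀ n, ‖T^[n] x - T^[n] y‖ ^ 2 ≤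
        α n * ‖x - y‖ ^ 2 + β n * (‖x - y‖ ^ 2 + ‖T^[n] x - T^[n] y‖ ^ 2)
          + 2 * μ n * β n * ‖x - y‖ * ‖T^[n] x - T^[n] y‖ + ξ n)
    (hξ : Tendsto ξ atTop (nhds 0))
    (hlim : Tendsto (fun n => α n + 2 * β n * (1 + μ n)) atTop (nhds 1)) :
    limsup (fun n => ‖T^[n] x - T^[n] y‖) atTop ≤ ‖x - y‖ := by
  set a : ℝ := ‖x - y‖ with ha
  set b : ℕ → ℝ := fun n => ‖T^[n] x - T^[n] y‖ with hb
  have ha0 : 0 ≤ a := norm_nonneg _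
  have hb0 : ∀ n, 0 ≤ b n := fun n => norm_nonneg _
  have hβs : 0 < 1 - βstar := by linarith
  set E : ℕ → ℝ := fun n => (α n + 2 * β n * (1 + μ n) - 1) * a ^ 2 + ξ n with hE
  set g : ℕ → ℝ := fun n => Real.sqrt (max (E n) 0 / (1 - βstar)) with hg
  have hg0 : ∀ n, 0 ≤ g n := fun n => Real.sqrt_nonneg _
  -- pointwise bound
  have key : ∀ n, b n ≤ a + g n := by
    intro n
    rcases le_or_gt (b n) a with h | h
    · linarith [hg0 n]
    · have ht : 0 < b n - a := by linarith
      have h1 := hcontr n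
      have h2 := hden n
      have h3 := hβ0 n
      have h4 := hβ1 n
      -- (b-a)^2 * (1-βstar) ≤ E n
      have hsq : (b n - a) ^ 2 * (1 - βstar) ≤ E n := by
        simp only [hE]
        nlinarith [mul_nonneg ha0 ht.le, mul_pos ht ht,
          mul_nonneg (mul_nonneg ha0 ht.le) (by linarith : (0:ℝ) ≤ 1 - β n),
          mul_nonneg (mul_nonneg ha0 ht.le) (by linarith : (0:ℝ) ≤ 1 - β n * (1 + 2 * μ n)),
          mul_nonneg (mul_nonneg ht.le ht.le) (by linarith : (0:ℝ) ≤ βstar - β n)]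
      have hsq2 : (b n - a) ^ 2 ≤ max (E n) 0 / (1 - βstar) := by
        rw [le_div_iff₀ hβs]
        exact hsq.trans (le_max_left _ _)
      have : b n - a ≤ g n := by
        have := Real.sqrt_le_sqrt hsq2
        rwa [Real.sqrt_sq ht.le] at this
      linarith
  -- g → 0
  have hEtend : Tendsto E atTop (nhds 0) := by
    have h1 : Tendsto (fun n => (α n + 2 * β n * (1 + μ n) - 1) * a ^ 2) atTop (nhds 0) := by
      have := (hlim.sub_const 1).mul_const (a ^ 2)
      simpa using this
    simpa using h1.add hξ
  have hgtend : Tendsto g atTop (nhds 0) := by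
    have h1 : Tendsto (fun n => max (E n) 0) atTop (nhds 0) := by
      have h0 : Tendsto (fun _ : ℕ => (0:ℝ)) atTop (nhds 0) := tendsto_const_nhds
      have := hEtend.max h0
      simpa using this
    have h2 : Tendsto (fun n => max (E n) 0 / (1 - βstar)) atTop (nhds 0) := by
      simpa using h1.div_const (1 - βstar)
    have := (Real.continuous_sqrt.tendsto 0).comp h2
    rw [Real.sqrt_zero] at this; exact this
  -- conclude
  have htend : Tendsto (fun n => a + g n) atTop (nhds a) := by
    have hc : Tendsto (fun _ : ℕ => a) atTop (nhds a) := tendsto_const_nhds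
    simpa using hc.add hgtend
  have hls : limsup (fun n => a + g n) atTop = a := htend.limsup_eq
  calc limsup b atTop ≤ limsup (fun n => a + g n) atTop :=
        limsup_le_limsup (Eventually.of_forall key)
          ((isBoundedUnder_of ⟨0, hb0⟩ : Filter.IsBoundedUnder (· ≥ ·) atTop b).isCoboundedUnder_le) htend.isBoundedUnder_le
    _ = a := hls
end

section
/- Let X be a real normed vector space and T : X → X a map. Fix x, y ∈ X and set a = ‖x − y‖ and bₙ = ‖Tⁿx − Tⁿy‖. Let α, β, μ, ξ : ℕ → ℝ satisfy, for all n: αₙ ≥ 0 and 0 ≤ βₙ < 1; the contractive condition bₙ² ≤ αₙa² + βₙ(a² + bₙ²) + 2μₙβₙ a bₙ + ξₙ; and the limit conditions αₙ → α ∈ [0, 1], βₙ → β ∈ [0, 1), μₙ → −1 and ξₙ → 0 as n → ∞. Then limsup_{n→∞} ‖Tⁿx − Tⁿy‖² ≤ ((α + β)/(1 + β))·‖x − y‖². -/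
set_option maxHeartbeats 1000000


open Filter

/-- Key algebraic lemma: if `s² ≤ αl·a² + βl·(a-s)² + η` with `0 ≤ s`, `0 ≤ a`,
`0 ≤ βl < 1`, `αl ≤ 1` and `0 ≤ η`, then `(1-βl)(1+βl)s² ≤ (1-βl)(αl+βl)a² + (1+βl)η`. -/
lemma key_quad (αl βl a s η : ℝ) (hs : 0 ≤ s) (ha : 0 ≤ a) (hβ0 : 0 ≤ βl)
    (hβ1 : βl < 1) (hαl : αl ≤ 1) (hη : 0 ≤ η)
    (h : s ^ 2 ≤ αl * a ^ 2 + βl * (a - s) ^ 2 + η) :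
    (1 - βl) * (1 + βl) * s ^ 2 ≤ (1 - βl) * (αl + βl) * a ^ 2 + (1 + βl) * η := by
  rcases le_total s a with h' | h'
  · nlinarith [mul_nonneg hβ0 (mul_nonneg (sub_nonneg.2 h') hs),
      mul_nonneg hβ0 (mul_nonneg (sub_nonneg.2 h') ha)]
  · nlinarith [mul_nonneg hβ0 (mul_nonneg (sub_nonneg.2 h') ha),
      mul_nonneg (mul_nonneg hβ0 (sub_nonneg.2 hαl)) (sq_nonneg a)]

/-- Theorem 2.6 for self-mappings: under the contractive condition (2.32)-(2.34)
with αₙ → α ∈ [0,1], βₙ → β ∈ [0,1), μₙ → −1, the limiting bound is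
limsup bₙ² ≤ ((α + β)/(1 + β))·a². -/
theorem stmt_12 {X : Type*} [NormedAddCommGroup X] [NormedSpace ℝ X]
    (T : X → X) (x y : X) (α β μ ξ : ℕ → ℝ) (αl βl : ℝ)
    (hα : ∀ n, 0 ≤ α n) (hβ0 : ∀ n, 0 ≤ β n) (hβ1 : ∀ n, β n < 1)
    (hcontr : ∀ n, ‖T^[n] x - T^[n] y‖ ^ 2 ≤
        α n * ‖x - y‖ ^ 2 + β n * (‖x - y‖ ^ 2 + ‖T^[n] x - T^[n] y‖ ^ 2)
          + 2 * μ n * β n * ‖x - y‖ * ‖T^[n] x - T^[n] y‖ + ξ n)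
    (hαlim : Tendsto α atTop (nhds αl)) (hαl0 : 0 ≤ αl) (hαl1 : αl ≤ 1)
    (hβlim : Tendsto β atTop (nhds βl)) (hβl0 : 0 ≤ βl) (hβl1 : βl < 1)
    (hμlim : Tendsto μ atTop (nhds (-1)))
    (hξlim : Tendsto ξ atTop (nhds 0)) :
    limsup (fun n => ‖T^[n] x - T^[n] y‖ ^ 2) atTop ≤
      ((αl + βl) / (1 + βl)) * ‖x - y‖ ^ 2 := by
  set a : ℝ := ‖x - y‖ with ha_def
  set b : ℕ → ℝ := fun n => ‖T^[n] x - T^[n] y‖ with hb_def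
  have ha : 0 ≤ a := norm_nonneg _
  have hbn : ∀ n, 0 ≤ b n := fun n => norm_nonneg _
  have hb2pos : (0:ℝ) < 1 - βl := by linarith
  have hb1pos : (0:ℝ) < 1 + βl := by linarith
  -- Step 1: eventual boundedness of b
  set K : ℝ := 2 * ((αl + 2) * a ^ 2 + 1) / (1 - βl) with hK_def
  have hK : (1 - βl) * K = 2 * ((αl + 2) * a ^ 2 + 1) := by
    rw [hK_def, mul_div_assoc', mul_comm (1 - βl), mul_div_assoc, div_self hb2pos.ne', mul_one]
  set M : ℝ := max 1 K with hM_def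
  have hM1 : (1:ℝ) ≤ M := le_max_left _ _
  have hMev : ∀ᶠ n in atTop, b n ≤ M := by
    have h1 : ∀ᶠ n in atTop, β n ≤ (1 + βl) / 2 := hβlim.eventually_le_const (by linarith)
    have h2 : ∀ᶠ n in atTop, μ n ≤ 0 := hμlim.eventually_le_const (by norm_num)
    have h3 : ∀ᶠ n in atTop, α n ≤ αl + 1 := hαlim.eventually_le_const (by linarith)
    have h4 : ∀ᶠ n in atTop, ξ n ≤ 1 := hξlim.eventually_le_const (by norm_num)
    filter_upwards [h1, h2, h3, h4] with n e1 e2 e3 e4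
    have hsq : (1 - βl) * (b n) ^ 2 ≤ 2 * ((αl + 2) * a ^ 2 + 1) := by
      have hμterm : 2 * μ n * β n * a * b n ≤ 0 := by
        have : 0 ≤ β n * a * b n := mul_nonneg (mul_nonneg (hβ0 n) ha) (hbn n)
        nlinarith
      have hβterm : β n * (a ^ 2 + (b n) ^ 2) ≤ a ^ 2 + (1 + βl) / 2 * (b n) ^ 2 := by
        nlinarith [mul_le_mul_of_nonneg_right (hβ1 n).le (sq_nonneg a),
          mul_le_mul_of_nonneg_right e1 (sq_nonneg (b n))]
      nlinarith [hcontr n, sq_nonneg a]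
    rcases le_total (b n) 1 with h | h
    · exact h.trans hM1
    · have hb2 : b n ≤ (b n) ^ 2 := by nlinarith
      have : (1 - βl) * b n ≤ (1 - βl) * K := by
        calc (1 - βl) * b n ≤ (1 - βl) * (b n) ^ 2 := by nlinarith
          _ ≤ 2 * ((αl + 2) * a ^ 2 + 1) := hsq
          _ = (1 - βl) * K := hK.symm
      have : b n ≤ K := le_of_mul_le_mul_left (by linarith) hb2pos
      exact this.trans (le_max_right _ _)
  -- Step 2: for every ε > 0, eventually b n ^ 2 ≤ B + ε
  have main : ∀ ε : ℝ, 0 < ε →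
      ∀ᶠ n in atTop, b n ^ 2 ≤ ((αl + βl) / (1 + βl)) * a ^ 2 + ε := by
    intro ε hε
    set D : ℝ := a ^ 2 + (a + M) ^ 2 + 2 * a * M + 1 with hD_def
    have hDpos : 0 < D := by positivity
    set δ : ℝ := ε * (1 - βl) / D with hδ_def
    have hδpos : 0 < δ := by positivity
    have h1 : ∀ᶠ n in atTop, |α n - αl| < δ := by
      have := (Metric.tendsto_nhds.mp hαlim) δ hδpos
      filter_upwards [this] with n hn; rwa [Real.dist_eq] at hn
    have h2 : ∀ᶠ n in atTop, |β n - βl| < δ := by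
      have := (Metric.tendsto_nhds.mp hβlim) δ hδpos
      filter_upwards [this] with n hn; rwa [Real.dist_eq] at hn
    have h3 : ∀ᶠ n in atTop, |μ n - (-1)| < δ := by
      have := (Metric.tendsto_nhds.mp hμlim) δ hδpos
      filter_upwards [this] with n hn; rwa [Real.dist_eq] at hn
    have h4 : ∀ᶠ n in atTop, |ξ n - 0| < δ := by
      have := (Metric.tendsto_nhds.mp hξlim) δ hδpos
      filter_upwards [this] with n hn; rwa [Real.dist_eq] at hn
    filter_upwards [h1, h2, h3, h4, hMev] with n e1 e2 e3 e4 eM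
    set s : ℝ := b n with hs_def
    have hs0 : 0 ≤ s := hbn n
    set η : ℝ := (α n - αl) * a ^ 2 + (β n - βl) * (a - s) ^ 2
        + 2 * (μ n + 1) * β n * a * s + (ξ n - 0) with hη_def
    have hηeq : α n * a ^ 2 + β n * (a ^ 2 + s ^ 2)
        + 2 * μ n * β n * a * s + ξ n
        = αl * a ^ 2 + βl * (a - s) ^ 2 + η := by
      rw [hη_def]; ring
    have hcontr' : s ^ 2 ≤ αl * a ^ 2 + βl * (a - s) ^ 2 + η := by
      rw [← hηeq]; exact hcontr n
    -- bound η
    have hηbound : η ≤ δ * D := by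
      have b1 : |α n - αl| * a ^ 2 ≤ δ * a ^ 2 :=
        mul_le_mul_of_nonneg_right e1.le (sq_nonneg a)
      have has : (a - s) ^ 2 ≤ (a + M) ^ 2 := by
        have h' : |a - s| ≤ a + M := by
          rw [abs_le]
          refine ⟨by linarith [eM, hs0, ha], by linarith [eM, hs0, ha]⟩
        calc (a - s) ^ 2 = |a - s| ^ 2 := (sq_abs _).symm
          _ ≤ (a + M) ^ 2 := pow_le_pow_left₀ (abs_nonneg _) h' 2
      have b2 : |β n - βl| * (a - s) ^ 2 ≤ δ * (a + M) ^ 2 := by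
        calc |β n - βl| * (a - s) ^ 2 ≤ δ * (a - s) ^ 2 :=
              mul_le_mul_of_nonneg_right e2.le (sq_nonneg _)
          _ ≤ δ * (a + M) ^ 2 := mul_le_mul_of_nonneg_left has hδpos.le
      have b3 : |μ n + 1| * (2 * β n * a * s) ≤ δ * (2 * a * M) := by
        have hq : 0 ≤ 2 * β n * a * s :=
          mul_nonneg (mul_nonneg (mul_nonneg (by norm_num) (hβ0 n)) ha) hs0
        have hβle : β n * a * s ≤ a * M := by
          have hsM : s ≤ M := eM
          have h1' : β n * a * s ≤ a * s := by
            nlinarith [mul_nonneg ha hs0, hβ1 n, hβ0 n]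
          have h2' : a * s ≤ a * M := mul_le_mul_of_nonneg_left hsM ha
          linarith
        calc |μ n + 1| * (2 * β n * a * s) ≤ δ * (2 * β n * a * s) := by
              have : |μ n + 1| ≤ δ := by
                have := e3; rw [sub_neg_eq_add] at this; exact this.le
              exact mul_le_mul_of_nonneg_right this hq
          _ ≤ δ * (2 * a * M) := by nlinarith
      have b4 : |ξ n - 0| ≤ δ := e4.le
      have t1 : (α n - αl) * a ^ 2 ≤ |α n - αl| * a ^ 2 :=
        mul_le_mul_of_nonneg_right (le_abs_self _) (sq_nonneg a)
      have t2 : (β n - βl) * (a - s) ^ 2 ≤ |β n - βl| * (a - s) ^ 2 :=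
        mul_le_mul_of_nonneg_right (le_abs_self _) (sq_nonneg _)
      have t3 : 2 * (μ n + 1) * β n * a * s ≤ |μ n + 1| * (2 * β n * a * s) := by
        have := le_abs_self (μ n + 1)
        have hq : 0 ≤ 2 * β n * a * s :=
          mul_nonneg (mul_nonneg (mul_nonneg (by norm_num) (hβ0 n)) ha) hs0
        nlinarith
      have t4 : ξ n - 0 ≤ |ξ n - 0| := le_abs_self _
      rw [hη_def, hD_def]
      nlinarith [b1, b2, b3, b4, t1, t2, t3, t4]
    have hδD : δ * D = ε * (1 - βl) := by
      rw [hδ_def]; field_simp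
    -- apply key lemma with η⁺ = max η 0
    have hkey := key_quad αl βl a s (max η 0) hs0 ha hβl0 hβl1 hαl1 (le_max_right _ _)
      (hcontr'.trans (by nlinarith [le_max_left η (0:ℝ)]))
    have hmax : max η 0 ≤ ε * (1 - βl) := by
      rcases le_total η 0 with h | h
      · rw [max_eq_right h]; positivity
      · rw [max_eq_left h]; linarith [hηbound, hδD.ge]
    -- conclude s² ≤ B + ε
    have hstep : (1 + βl) * s ^ 2 ≤ (αl + βl) * a ^ 2 + (1 + βl) * ε := by
      nlinarith [hkey, mul_le_mul_of_nonneg_left hmax hb1pos.le, hb2pos]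
    calc s ^ 2 ≤ ((αl + βl) * a ^ 2 + (1 + βl) * ε) / (1 + βl) := by
          rw [le_div_iff₀ hb1pos]; linarith
      _ = (αl + βl) / (1 + βl) * a ^ 2 + ε := by field_simp
  -- Step 3: conclude
  have hcb : IsCoboundedUnder (· ≤ ·) atTop (fun n => b n ^ 2) :=
    isCoboundedUnder_le_of_le atTop (x := 0) (fun n => sq_nonneg _)
  refine le_of_forall_pos_le_add (fun ε hε => ?_)
  exact limsup_le_of_le hcb (main ε hε)
end

section
/- Let X be a real normed vector space and T : X → X a map. Suppose that for every pair x, y ∈ X there exist sequences α, β, μ, ξ : ℕ → ℝ (depending on x and y) and limits α(x,y) ∈ [0, 1), β(x,y) ∈ [0, 1) such that, for all n: αₙ ≥ 0, 0 ≤ βₙ < 1, and ‖Tⁿx − Tⁿy‖² ≤ αₙ‖x − y‖² + βₙ(‖x − y‖² + ‖Tⁿx − Tⁿy‖²) + 2μₙβₙ‖x − y‖·‖Tⁿx − Tⁿy‖ + ξₙ; and αₙ → α(x,y), βₙ → β(x,y), μₙ → −1 and ξₙ → 0 as n → ∞. Then T has at most one fixed point in X. -/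
open Filter

/-- Corollary 2.7 (uniqueness): an asymptotically strictly contractive self-mapping
in the intermediate sense has at most one fixed point. -/
theorem stmt_13 {X : Type*} [NormedAddCommGroup X] [NormedSpace ℝ X]
    (T : X → X)
    (hyp : ∀ x y : X, ∃ (α β μ ξ : ℕ → ℝ) (αl βl : ℝ),
      0 ≤ αl ∧ αl < 1 ∧ 0 ≤ βl ∧ βl < 1 ∧
      (∀ n, 0 ≤ α n) ∧ (∀ n, 0 ≤ β n) ∧ (∀ n, β n < 1) ∧
      (∀ n, ‖T^[n] x - T^[n] y‖ ^ 2 ≤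
        α n * ‖x - y‖ ^ 2 + β n * (‖x - y‖ ^ 2 + ‖T^[n] x - T^[n] y‖ ^ 2)
          + 2 * μ n * β n * ‖x - y‖ * ‖T^[n] x - T^[n] y‖ + ξ n) ∧
      Tendsto α atTop (nhds αl) ∧ Tendsto β atTop (nhds βl) ∧
      Tendsto μ atTop (nhds (-1)) ∧ Tendsto ξ atTop (nhds 0)) :
    ∀ z w : X, T z = z → T w = w → z = w := by
  intro z w hz hw
  obtain ⟨α, β, μ, ξ, αl, βl, hαl0, hαl1, hβl0, hβl1, hα0, hβ0, hβ1, hineq,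
    hαt, hβt, hμt, hξt⟩ := hyp z w
  have hiter : ∀ n, T^[n] z = z := fun n => Function.iterate_fixed hz n
  have hiterw : ∀ n, T^[n] w = w := fun n => Function.iterate_fixed hw n
  set D := ‖z - w‖ with hD
  have hineq' : ∀ n, D ^ 2 ≤
      α n * D ^ 2 + β n * (D ^ 2 + D ^ 2) + 2 * μ n * β n * D * D + ξ n := by
    intro n
    have := hineq n
    rwa [hiter n, hiterw n] at this
  have hlim : Tendsto (fun n => α n * D ^ 2 + β n * (D ^ 2 + D ^ 2)
      + 2 * μ n * β n * D * D + ξ n) atTop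
      (nhds (αl * D ^ 2 + βl * (D ^ 2 + D ^ 2) + 2 * (-1) * βl * D * D + 0)) := by
    exact ((((hαt.mul_const _).add (hβt.mul_const _)).add
      ((((tendsto_const_nhds.mul hμt).mul hβt).mul_const D).mul_const D)).add hξt)
  have hle : D ^ 2 ≤ αl * D ^ 2 + βl * (D ^ 2 + D ^ 2) + 2 * (-1) * βl * D * D + 0 :=
    ge_of_tendsto' hlim hineq'
  have hD2 : D ^ 2 = 0 := le_antisymm (by nlinarith) (sq_nonneg D)
  have hD0 : D = 0 := by
    have := pow_eq_zero_iff (n := 2) (by norm_num) |>.mp hD2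
    exact this
  have : z - w = 0 := by rwa [hD, norm_eq_zero] at hD0
  exact sub_eq_zero.mp this
end

section
/- Let X be a real normed vector space, A, B ⊆ X nonempty subsets, and T : X → X a map with T(A) ⊆ B and T(B) ⊆ A. Let D ≥ 0 satisfy D ≤ ‖a − b‖ for all a ∈ A and b ∈ B, and suppose x ∈ A and y ∈ B satisfy ‖x − y‖ = D. Set bₙ = ‖Tⁿx − Tⁿy‖. Suppose there are sequences α, β, μ, ξ, γ : ℕ → ℝ such that, for all n: αₙ ≥ 0, γₙ ≥ 0, 0 ≤ βₙ < 1, and bₙ² ≤ αₙD² + βₙ(D² + bₙ²) + 2μₙβₙ D bₙ + ξₙ + γₙD²; and αₙ → α ≥ 0, γₙ → γ ≥ 0 with α + γ ≤ 1, βₙ → β ∈ [0, 1), μₙ → −1 and ξₙ → 0 as n → ∞. Then ‖Tⁿx − Tⁿy‖ → D as n → ∞. -/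
open Filter

/-- Key convergence step of Theorem 3.1: under the cyclic contractive condition (3.1),
the distances of the iterates converge to D = dist(A,B). -/
theorem stmt_15 {X : Type*} [NormedAddCommGroup X] [NormedSpace ℝ X]
    (A B : Set X) (hA : A.Nonempty) (hB : B.Nonempty) (T : X → X)
    (hAB : Set.MapsTo T A B) (hBA : Set.MapsTo T B A)
    (D : ℝ) (hD0 : 0 ≤ D) (hDle : ∀ a ∈ A, ∀ b ∈ B, D ≤ ‖a - b‖)
    (x : X) (hx : x ∈ A) (y : X) (hy : y ∈ B) (hxy : ‖x - y‖ = D)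
    (α β μ ξ γ : ℕ → ℝ) (αl γl βl : ℝ)
    (hα : ∀ n, 0 ≤ α n) (hγ : ∀ n, 0 ≤ γ n)
    (hβ0 : ∀ n, 0 ≤ β n) (hβ1 : ∀ n, β n < 1)
    (hcontr : ∀ n, ‖T^[n] x - T^[n] y‖ ^ 2 ≤
        α n * D ^ 2 + β n * (D ^ 2 + ‖T^[n] x - T^[n] y‖ ^ 2)
          + 2 * μ n * β n * D * ‖T^[n] x - T^[n] y‖ + ξ n + γ n * D ^ 2)
    (hαlim : Tendsto α atTop (nhds αl)) (hαl0 : 0 ≤ αl)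
    (hγlim : Tendsto γ atTop (nhds γl)) (hγl0 : 0 ≤ γl)
    (hsum : αl + γl ≤ 1)
    (hβlim : Tendsto β atTop (nhds βl)) (hβl0 : 0 ≤ βl) (hβl1 : βl < 1)
    (hμlim : Tendsto μ atTop (nhds (-1)))
    (hξlim : Tendsto ξ atTop (nhds 0)) :
    Tendsto (fun n => ‖T^[n] x - T^[n] y‖) atTop (nhds D) := by
  set b : ℕ → ℝ := fun n => ‖T^[n] x - T^[n] y‖ with hb
  -- cyclicity: iterates stay in A, B alternately
  have hmem : ∀ n, (T^[n] x ∈ A ∧ T^[n] y ∈ B) ∨ (T^[n] x ∈ B ∧ T^[n] y ∈ A) := by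
    intro n
    induction n with
    | zero => exact Or.inl ⟨hx, hy⟩
    | succ n ih =>
      rw [Function.iterate_succ_apply', Function.iterate_succ_apply']
      rcases ih with ⟨h1, h2⟩ | ⟨h1, h2⟩
      · exact Or.inr ⟨hAB h1, hBA h2⟩
      · exact Or.inl ⟨hBA h1, hAB h2⟩
  have hDb : ∀ n, D ≤ b n := by
    intro n
    rcases hmem n with ⟨h1, h2⟩ | ⟨h1, h2⟩
    · exact hDle _ h1 _ h2
    · show D ≤ ‖T^[n] x - T^[n] y‖
      rw [norm_sub_rev]
      exact hDle _ h2 _ h1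
  -- auxiliary sequence
  set c : ℕ → ℝ := fun n => μ n * β n + β n - 1 with hc
  have hclim : Tendsto c atTop (nhds (-1)) := by
    have : Tendsto c atTop (nhds ((-1) * βl + βl - 1)) :=
      ((hμlim.mul hβlim).add hβlim).sub tendsto_const_nhds
    simpa using this
  have hcneg : ∀ᶠ n in atTop, c n ≤ 0 :=
    (hclim.eventually_lt_const (by norm_num : (-1:ℝ) < 0)).mono fun n h => le_of_lt h
  set r : ℕ → ℝ := fun n =>
    ((α n + γ n + 1) * D ^ 2 + ξ n + 2 * D ^ 2 * c n) / (1 - β n) with hr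
  have hβpos : ∀ n, 0 < 1 - β n := fun n => by linarith [hβ1 n]
  have hkey : ∀ᶠ n in atTop, (b n - D) ^ 2 ≤ r n := by
    filter_upwards [hcneg] with n hcn
    rw [hr, le_div_iff₀ (hβpos n)]
    have h : b n ^ 2 ≤ α n * D ^ 2 + β n * (D ^ 2 + b n ^ 2)
        + 2 * μ n * β n * D * b n + ξ n + γ n * D ^ 2 := hcontr n
    have hbD := hDb n
    have hb0 : 0 ≤ b n := norm_nonneg _
    have hcn' : D * c n ≤ 0 := mul_nonpos_of_nonneg_of_nonpos hD0 hcn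
    have hcdef : c n = μ n * β n + β n - 1 := rfl
    nlinarith [mul_nonpos_of_nonpos_of_nonneg hcn' (sub_nonneg.2 hbD)]
  have hrlim : Tendsto r atTop (nhds ((αl + γl - 1) * D ^ 2 / (1 - βl))) := by
    have hnum : Tendsto (fun n => (α n + γ n + 1) * D ^ 2 + ξ n + 2 * D ^ 2 * c n)
        atTop (nhds ((αl + γl + 1) * D ^ 2 + 0 + 2 * D ^ 2 * (-1))) :=
      ((((hαlim.add hγlim).add tendsto_const_nhds).mul tendsto_const_nhds).add hξlim).add
        (tendsto_const_nhds.mul hclim)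
    have hden : Tendsto (fun n => 1 - β n) atTop (nhds (1 - βl)) :=
      tendsto_const_nhds.sub hβlim
    have := hnum.div hden (by linarith)
    convert this using 2
    · rfl
    ring
  set L : ℝ := (αl + γl - 1) * D ^ 2 / (1 - βl) with hL
  have hL0 : L ≤ 0 := by
    apply div_nonpos_of_nonpos_of_nonneg
    · nlinarith [sq_nonneg D]
    · linarith
  -- squeeze (b n - D)^2 → 0
  have hsq : Tendsto (fun n => (b n - D) ^ 2) atTop (nhds 0) := by
    apply squeeze_zero' (Eventually.of_forall fun n => sq_nonneg _)
      (hkey.mono fun n h => h.trans (le_max_left _ _))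
    have : Tendsto (fun n => max (r n) 0) atTop (nhds (max L 0)) :=
      hrlim.max tendsto_const_nhds
    rwa [max_eq_right hL0] at this
  have habs : Tendsto (fun n => |b n - D|) atTop (nhds 0) := by
    have := (Real.continuous_sqrt.tendsto 0).comp hsq
    simpa [Function.comp_def, Real.sqrt_sq_eq_abs] using this
  rw [tendsto_iff_norm_sub_tendsto_zero]
  simpa [Real.norm_eq_abs] using habs
end
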